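/- Let γ: [0,∞) → (0,∞) be C^2 with γ(0) = γ'(0) = 1, γ increasing and γ'' < 0. Let t > 0 and let h: [0,t] → ℝ be continuous with |h(s)| ≤ -γ''(s)/γ(s). If y solves y'' = h·y on [0,t] with y(0) = y'(0) > 0, then y(s) > 0 for all s ∈ [0,t] and y(s) ≤ γ(s) y(t)/γ(t) for all s ∈ [0,t]; moreover y(s)/γ(s) is nondecreasing on [0,t]. -/

import Mathlib

/-!
With `W = γ y' - γ' y` we have `(y / γ)' = W / γ²` and, by the equation, `W' = y (h γ - γ'')`.
The bound `|h| ≤ -γ'' / γ` makes `h γ - γ'' ≥ 0`, and `γ(0) = γ'(0)`, `y(0) = y'(0)` give `W(0) = 0`.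
So as long as `y` stays positive, `W ≥ 0` and `y / γ` is nondecreasing, hence `y / γ ≥ y(0) > 0`;
a first zero of `y` would contradict this.
-/

open Set

def wronskian (f f' g g' : ℝ → ℝ) (s : ℝ) : ℝ :=
  f s * g' s - f' s * g s

theorem hasDerivAt_wronskian {f f' g g' : ℝ → ℝ} {f'' g'' s : ℝ}
    (hf : HasDerivAt f (f' s) s) (hf' : HasDerivAt f' f'' s)
    (hg : HasDerivAt g (g' s) s) (hg' : HasDerivAt g' g'' s) :
    HasDerivAt (wronskian f f' g g') (f s * g'' - f'' * g s) s :=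
  ((hf.mul hg').sub (hf'.mul hg)).congr_deriv (by ring)

theorem monotoneOn_Icc_of_hasDerivAt_nonneg {f f' : ℝ → ℝ} {a b : ℝ}
    (hf : ∀ s ∈ Icc a b, HasDerivAt f (f' s) s) (hf' : ∀ s ∈ Ioo a b, 0 ≤ f' s) :
    MonotoneOn f (Icc a b) := by
  refine monotoneOn_of_hasDerivWithinAt_nonneg (f' := f') (convex_Icc a b)
    (fun s hs => (hf s hs).continuousAt.continuousWithinAt) (fun s hs => ?_) (fun s hs => ?_)
  · rw [interior_Icc] at hs ⊢
    exact (hf s (Ioo_subset_Icc_self hs)).hasDerivWithinAt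
  · rw [interior_Icc] at hs
    exact hf' s hs

theorem monotoneOn_div_of_wronskian_nonneg {γ γ' y y' : ℝ → ℝ} {a b : ℝ}
    (hγ : ∀ s ∈ Icc a b, HasDerivAt γ (γ' s) s) (hγpos : ∀ s ∈ Icc a b, 0 < γ s)
    (hy : ∀ s ∈ Icc a b, HasDerivAt y (y' s) s)
    (hW : ∀ s ∈ Icc a b, 0 ≤ wronskian γ γ' y y' s) :
    MonotoneOn (fun s => y s / γ s) (Icc a b) := by
  refine monotoneOn_Icc_of_hasDerivAt_nonneg
    (fun s hs => (hy s hs).div (hγ s hs) (hγpos s hs).ne') (fun s hs => ?_)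
  have hW := hW s (Ioo_subset_Icc_self hs)
  rw [wronskian] at hW
  exact div_nonneg (by linarith) (sq_nonneg _)

theorem pos_on_Icc_of_pos_on_Ico {f : ℝ → ℝ} {a b : ℝ} (hf : ContinuousOn f (Icc a b))
    (ha : 0 < f a) (hstep : ∀ c ∈ Ioc a b, (∀ s ∈ Ico a c, 0 < f s) → 0 < f c) :
    ∀ s ∈ Icc a b, 0 < f s := by
  by_contra! hneg
  have hclosed : IsClosed (Icc a b ∩ f ⁻¹' Iic 0) :=
    hf.preimage_isClosed_of_isClosed isClosed_Icc isClosed_Iic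
  obtain ⟨c, ⟨hc, hfc⟩, hmin⟩ :=
    (isCompact_Icc.of_isClosed_subset hclosed inter_subset_left).exists_isLeast (let ⟨s, hs, hfs⟩ := hneg; ⟨s, hs, hfs⟩)
  have hac : a < c := hc.1.lt_of_ne fun hac => (hac ▸ ha).not_ge hfc
  refine (hstep c ⟨hac, hc.2⟩ fun s hs => ?_).not_ge hfc
  by_contra! hfs
  exact (hmin ⟨⟨hs.1, hs.2.le.trans hc.2⟩, hfs⟩).not_gt hs.2

theorem mul_sub_nonneg_of_abs_le_neg_div {h γ g : ℝ} (hγ : 0 < γ) (hbound : |h| ≤ -g / γ) :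
    0 ≤ h * γ - g := by
  have habs : |h| * γ ≤ -g := (le_div_iff₀ hγ).1 hbound
  nlinarith [neg_abs_le h]

theorem wronskian_nonneg_of_nonneg {γ γ' γ'' h y y' : ℝ → ℝ} {a b : ℝ}
    (hγ : ∀ s ∈ Icc a b, HasDerivAt γ (γ' s) s) (hγ' : ∀ s ∈ Icc a b, HasDerivAt γ' (γ'' s) s)
    (hγpos : ∀ s ∈ Icc a b, 0 < γ s) (hbound : ∀ s ∈ Icc a b, |h s| ≤ -γ'' s / γ s)
    (hy : ∀ s ∈ Icc a b, HasDerivAt y (y' s) s)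
    (hy' : ∀ s ∈ Icc a b, HasDerivAt y' (h s * y s) s)
    (hWa : 0 ≤ wronskian γ γ' y y' a) (hnonneg : ∀ s ∈ Ioo a b, 0 ≤ y s) :
    ∀ s ∈ Icc a b, 0 ≤ wronskian γ γ' y y' s := by
  have hmono : MonotoneOn (wronskian γ γ' y y') (Icc a b) := by
    refine monotoneOn_Icc_of_hasDerivAt_nonneg
      (fun s hs => hasDerivAt_wronskian (hγ s hs) (hγ' s hs) (hy s hs) (hy' s hs))
      (fun s hs => ?_)
    have hs' := Ioo_subset_Icc_self hs
    have hfac := mul_sub_nonneg_of_abs_le_neg_div (hγpos s hs') (hbound s hs')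
    calc (0 : ℝ) ≤ y s * (h s * γ s - γ'' s) := mul_nonneg (hnonneg s hs) hfac
      _ = γ s * (h s * y s) - γ'' s * y s := by ring
  exact fun s hs => hWa.trans (hmono (left_mem_Icc.2 (hs.1.trans hs.2)) hs hs.1)

theorem ode_comparison_positive
    (γ : ℝ → ℝ) (hγC2 : ContDiff ℝ 2 γ)
    (hγpos : ∀ s : ℝ, 0 ≤ s → 0 < γ s)
    (hγ0 : γ 0 = 1) (hγ'0 : deriv γ 0 = 1)
    (t : ℝ)
    (h y y' : ℝ → ℝ)
    (hbound : ∀ s ∈ Set.Icc 0 t, |h s| ≤ -(deriv (deriv γ) s) / γ s)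
    (hy : ∀ s ∈ Set.Icc 0 t, HasDerivAt y (y' s) s)
    (hy' : ∀ s ∈ Set.Icc 0 t, HasDerivAt y' (h s * y s) s)
    (hinit : y 0 = y' 0) (hinitpos : 0 < y 0) :
    (∀ s ∈ Set.Icc 0 t, 0 < y s ∧ y s ≤ γ s * y t / γ t) ∧
      MonotoneOn (fun s => y s / γ s) (Set.Icc 0 t) := by
  have hγ s : HasDerivAt γ (deriv γ s) s := (hγC2.differentiable (by norm_num) s).hasDerivAt
  have hγ' s : HasDerivAt (deriv γ) (deriv (deriv γ) s) s :=
    (hγC2.differentiable_deriv_two s).hasDerivAt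
  have hW0 : wronskian γ (deriv γ) y y' 0 = 0 := by simp [wronskian, hγ0, hγ'0, hinit]
  have key : ∀ c ≤ t, (∀ s ∈ Ico 0 c, 0 < y s) → MonotoneOn (fun s => y s / γ s) (Icc 0 c) := by
    intro c hct hpos
    have hsub : Icc 0 c ⊆ Icc 0 t := Icc_subset_Icc_right hct
    exact monotoneOn_div_of_wronskian_nonneg (fun s _ => hγ s) (fun s hs => hγpos s hs.1)
      (fun s hs => hy s (hsub hs))
      (wronskian_nonneg_of_nonneg (fun s _ => hγ s) (fun s _ => hγ' s) (fun s hs => hγpos s hs.1)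
        (fun s hs => hbound s (hsub hs)) (fun s hs => hy s (hsub hs))
        (fun s hs => hy' s (hsub hs)) hW0.ge fun s hs => (hpos s (Ioo_subset_Ico_self hs)).le)
  have ypos : ∀ s ∈ Icc 0 t, 0 < y s := by
    refine pos_on_Icc_of_pos_on_Ico (fun s hs => (hy s hs).continuousAt.continuousWithinAt)
      hinitpos fun c hc hpos => ?_
    have hle := key c hc.2 hpos (left_mem_Icc.2 hc.1.le) (right_mem_Icc.2 hc.1.le) hc.1.le
    exact (div_pos_iff_of_pos_right (hγpos c hc.1.le)).1
      ((div_pos hinitpos (hγpos 0 le_rfl)).trans_le hle)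
  have hmono := key t le_rfl fun s hs => ypos s (Ico_subset_Icc_self hs)
  refine ⟨fun s hs => ⟨ypos s hs, ?_⟩, hmono⟩
  have hγt := hγpos t (hs.1.trans hs.2)
  have hle := hmono hs (right_mem_Icc.2 (hs.1.trans hs.2)) hs.2
  rw [div_le_div_iff₀ (hγpos s hs.1) hγt] at hle
  rw [le_div_iff₀ hγt]
  linarith [mul_comm (y t) (γ s)]
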